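/- arXiv:2603.09119 — 4 statements merged into one kernel-verified Lean document; each statement's English description precedes it below -/
import Mathlib

section
/- Let d be a positive integer, let κ, μ, ν be d-partitions with κ ≺ μ and κ ≺ ν, and let m be a nonnegative integer such that κ_d = 0 or m = 0. Then there exists a unique d-partition ρ such that μ ≺ ρ, ν ≺ ρ, ρ_1 + κ_d = m + min(μ_d, ν_d) + max(μ_1, ν_1), and ρ_i + κ_{i−1} = min(μ_{i−1}, ν_{i−1}) + max(μ_i, ν_i) for all 2 ≤ i ≤ d. -/
/-- `α ≺ β`: `β₁ ≥ α₁ ≥ β₂ ≥ α₂ ≥ ⋯ ≥ β_d ≥ α_d` (0-indexed). -/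
def Interlace (d : ℕ) (α β : Fin d → ℕ) : Prop :=
  (∀ i, α i ≤ β i) ∧ ∀ i : Fin d, ∀ h : (i : ℕ) + 1 < d, β ⟨(i : ℕ) + 1, h⟩ ≤ α i

private lemma antitone_of_succ {d : ℕ} {f : Fin d → ℕ}
    (h : ∀ i : Fin d, ∀ hi : (i : ℕ) + 1 < d, f ⟨(i : ℕ) + 1, hi⟩ ≤ f i) : Antitone f := by
  intro a b hab
  obtain ⟨a, ha⟩ := a; obtain ⟨b, hb⟩ := b
  simp only [Fin.mk_le_mk] at hab
  induction b with
  | zero => interval_cases a; exact le_rfl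
  | succ b ih =>
    rcases Nat.lt_or_ge a (b+1) with h' | h'
    · exact le_trans (h ⟨b, by omega⟩ hb) (ih (by omega) (by omega))
    · have : a = b + 1 := by omega
      subst this; exact le_rfl

/-- Forward local growth: given `d`-partitions `κ ≺ μ`, `κ ≺ ν` and `m : ℕ` with
`κ_d = 0` or `m = 0`, there is a unique `d`-partition `ρ` with `μ ≺ ρ`, `ν ≺ ρ`,
`ρ₁ + κ_d = m + min(μ_d,ν_d) + max(μ₁,ν₁)`, and
`ρ_i + κ_{i-1} = min(μ_{i-1},ν_{i-1}) + max(μ_i,ν_i)` for `2 ≤ i ≤ d`. -/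
theorem forward_local_growth (d : ℕ) (hd : 0 < d) (κ μ ν : Fin d → ℕ)
    (hκ : Antitone κ) (hμ : Antitone μ) (hν : Antitone ν)
    (hκμ : Interlace d κ μ) (hκν : Interlace d κ ν) (m : ℕ)
    (hm : κ ⟨d - 1, Nat.sub_lt hd Nat.one_pos⟩ = 0 ∨ m = 0) :
    ∃! ρ : Fin d → ℕ, Antitone ρ ∧ Interlace d μ ρ ∧ Interlace d ν ρ ∧
      ρ ⟨0, hd⟩ + κ ⟨d - 1, Nat.sub_lt hd Nat.one_pos⟩ =
        m + min (μ ⟨d - 1, Nat.sub_lt hd Nat.one_pos⟩) (ν ⟨d - 1, Nat.sub_lt hd Nat.one_pos⟩) +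
          max (μ ⟨0, hd⟩) (ν ⟨0, hd⟩) ∧
      ∀ i : Fin d, 0 < (i : ℕ) →
        ρ i + κ ⟨(i : ℕ) - 1, lt_of_le_of_lt (Nat.sub_le _ _) i.isLt⟩ =
          min (μ ⟨(i : ℕ) - 1, lt_of_le_of_lt (Nat.sub_le _ _) i.isLt⟩)
              (ν ⟨(i : ℕ) - 1, lt_of_le_of_lt (Nat.sub_le _ _) i.isLt⟩) +
            max (μ i) (ν i) := by
  have hκle : ∀ i : Fin d, κ i ≤ min (μ i) (ν i) := fun i => le_min (hκμ.1 i) (hκν.1 i)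
  have hmaxle : ∀ i : Fin d, ∀ h : (i : ℕ) + 1 < d,
      max (μ ⟨(i : ℕ) + 1, h⟩) (ν ⟨(i : ℕ) + 1, h⟩) ≤ κ i :=
    fun i h => max_le (hκμ.2 i h) (hκν.2 i h)
  set L : Fin d := ⟨d - 1, Nat.sub_lt hd Nat.one_pos⟩ with hLdef
  set pr : ∀ i : Fin d, 0 < (i : ℕ) → Fin d :=
    fun i _ => ⟨(i : ℕ) - 1, lt_of_le_of_lt (Nat.sub_le _ _) i.isLt⟩ with hprdef
  set ρ : Fin d → ℕ := fun i =>
    if h : 0 < (i : ℕ) then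
      min (μ (pr i h)) (ν (pr i h)) + max (μ i) (ν i) - κ (pr i h)
    else m + min (μ L) (ν L) + max (μ i) (ν i) - κ L with hρdef
  -- key facts about ρ at positive indices
  have keyeq : ∀ i : Fin d, ∀ h : 0 < (i : ℕ),
      ρ i + κ (pr i h) = min (μ (pr i h)) (ν (pr i h)) + max (μ i) (ν i) ∧
      max (μ i) (ν i) ≤ ρ i ∧ ρ i ≤ min (μ (pr i h)) (ν (pr i h)) := by
    intro i h
    have h1 : κ (pr i h) ≤ min (μ (pr i h)) (ν (pr i h)) := hκle _
    have h2 : max (μ i) (ν i) ≤ κ (pr i h) := by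
      have hlt : ((pr i h : Fin d) : ℕ) + 1 < d := by
        simp only [hprdef]; omega
      have := hmaxle (pr i h) hlt
      have hi : (⟨((pr i h : Fin d) : ℕ) + 1, hlt⟩ : Fin d) = i := by
        apply Fin.ext; simp only [hprdef]; omega
      rwa [hi] at this
    have hρi : ρ i = min (μ (pr i h)) (ν (pr i h)) + max (μ i) (ν i) - κ (pr i h) := by
      simp only [hρdef, dif_pos h]
    omega
  have keyeq0 : ρ ⟨0, hd⟩ + κ L = m + min (μ L) (ν L) + max (μ ⟨0, hd⟩) (ν ⟨0, hd⟩) ∧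
      max (μ ⟨0, hd⟩) (ν ⟨0, hd⟩) ≤ ρ ⟨0, hd⟩ := by
    have h1 : κ L ≤ min (μ L) (ν L) := hκle _
    have hρ0 : ρ ⟨0, hd⟩ = m + min (μ L) (ν L) + max (μ ⟨0, hd⟩) (ν ⟨0, hd⟩) - κ L := by
      simp only [hρdef]; rfl
    omega
  -- ρ at index zero equals ρ ⟨0,hd⟩ for any i with (i:ℕ)=0
  have hzero : ∀ i : Fin d, (i : ℕ) = 0 → i = ⟨0, hd⟩ := fun i h => Fin.ext h
  have hρlower : ∀ i : Fin d, max (μ i) (ν i) ≤ ρ i := by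
    intro i
    rcases Nat.eq_zero_or_pos (i : ℕ) with h | h
    · rw [hzero i h]; exact keyeq0.2
    · exact (keyeq i h).2.1
  have hρupper : ∀ i : Fin d, ∀ h : (i : ℕ) + 1 < d,
      ρ ⟨(i : ℕ) + 1, h⟩ ≤ min (μ i) (ν i) := by
    intro i h
    have hpos : 0 < ((⟨(i : ℕ) + 1, h⟩ : Fin d) : ℕ) := Nat.succ_pos _
    have := (keyeq ⟨(i : ℕ) + 1, h⟩ hpos).2.2
    have hpi : pr ⟨(i : ℕ) + 1, h⟩ hpos = i := by apply Fin.ext; simp [hprdef]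
    rwa [hpi] at this
  have hant : Antitone ρ := by
    apply antitone_of_succ
    intro i hi
    exact le_trans (hρupper i hi) (le_trans (min_le_max) (hρlower i))
  have hintμ : Interlace d μ ρ :=
    ⟨fun i => le_trans (le_max_left _ _) (hρlower i),
     fun i h => le_trans (hρupper i h) (min_le_left _ _)⟩
  have hintν : Interlace d ν ρ :=
    ⟨fun i => le_trans (le_max_right _ _) (hρlower i),
     fun i h => le_trans (hρupper i h) (min_le_right _ _)⟩
  refine ⟨ρ, ⟨hant, hintμ, hintν, keyeq0.1, fun i h => (keyeq i h).1⟩, ?_⟩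
  rintro ρ' ⟨-, -, -, h0', hi'⟩
  funext i
  rcases Nat.eq_zero_or_pos (i : ℕ) with h | h
  · rw [hzero i h]
    have := keyeq0.1
    omega
  · have e1 := hi' i h
    have e2 := (keyeq i h).1
    simp only [hprdef] at e2
    omega
end

section
/- Let d be a positive integer and let μ, ν, ρ be d-partitions with μ ≺ ρ and ν ≺ ρ. Then there exist a unique d-partition κ and a unique nonnegative integer m such that κ ≺ μ, κ ≺ ν, κ_d = 0 or m = 0, ρ_1 + κ_d = m + min(μ_d, ν_d) + max(μ_1, ν_1), and ρ_i + κ_{i−1} = min(μ_{i−1}, ν_{i−1}) + max(μ_i, ν_i) for all 2 ≤ i ≤ d. -/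
lemma antitone_of_step {d : ℕ} {f : Fin d → ℕ}
    (h : ∀ (j : Fin d) (hj : (j:ℕ)+1 < d), f ⟨(j:ℕ)+1, hj⟩ ≤ f j) : Antitone f := by
  intro ⟨i, hi⟩ ⟨j, hj⟩ hij
  simp only [Fin.mk_le_mk] at hij
  induction j with
  | zero =>
    have : i = 0 := Nat.le_zero.mp hij
    subst this; exact le_refl _
  | succ k ih =>
    rcases Nat.lt_or_ge i (k+1) with hlt | hge
    · have hk : k < d := Nat.lt_of_succ_lt hj
      exact le_trans (h ⟨k, hk⟩ hj) (ih hk (Nat.lt_succ_iff.mp hlt))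
    · have : i = k + 1 := le_antisymm hij hge
      subst this; exact le_refl _

/-- Backward local growth: given `d`-partitions `μ ≺ ρ`, `ν ≺ ρ`, there is a unique
pair `(κ, m)` of a `d`-partition and a nonnegative integer with `κ ≺ μ`, `κ ≺ ν`,
`κ_d = 0` or `m = 0`, `ρ₁ + κ_d = m + min(μ_d,ν_d) + max(μ₁,ν₁)`, and
`ρ_i + κ_{i-1} = min(μ_{i-1},ν_{i-1}) + max(μ_i,ν_i)` for `2 ≤ i ≤ d`. -/
theorem backward_local_growth (d : ℕ) (hd : 0 < d) (μ ν ρ : Fin d → ℕ)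
    (hμ : Antitone μ) (hν : Antitone ν) (hρ : Antitone ρ)
    (hμρ : Interlace d μ ρ) (hνρ : Interlace d ν ρ) :
    ∃! κm : (Fin d → ℕ) × ℕ, Antitone κm.1 ∧ Interlace d κm.1 μ ∧ Interlace d κm.1 ν ∧
      (κm.1 ⟨d - 1, Nat.sub_lt hd Nat.one_pos⟩ = 0 ∨ κm.2 = 0) ∧
      ρ ⟨0, hd⟩ + κm.1 ⟨d - 1, Nat.sub_lt hd Nat.one_pos⟩ =
        κm.2 +
          min (μ ⟨d - 1, Nat.sub_lt hd Nat.one_pos⟩) (ν ⟨d - 1, Nat.sub_lt hd Nat.one_pos⟩) +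
          max (μ ⟨0, hd⟩) (ν ⟨0, hd⟩) ∧
      ∀ i : Fin d, 0 < (i : ℕ) →
        ρ i + κm.1 ⟨(i : ℕ) - 1, lt_of_le_of_lt (Nat.sub_le _ _) i.isLt⟩ =
          min (μ ⟨(i : ℕ) - 1, lt_of_le_of_lt (Nat.sub_le _ _) i.isLt⟩)
              (ν ⟨(i : ℕ) - 1, lt_of_le_of_lt (Nat.sub_le _ _) i.isLt⟩) +
            max (μ i) (ν i) := by
  have hlast : d - 1 < d := Nat.sub_lt hd Nat.one_pos
  set L : Fin d := ⟨d - 1, hlast⟩ with hL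
  set Z : Fin d := ⟨0, hd⟩ with hZ
  set A := min (μ L) (ν L) + max (μ Z) (ν Z) with hA
  set κ : Fin d → ℕ := fun j =>
    if h : (j : ℕ) + 1 < d then
      min (μ j) (ν j) + max (μ ⟨(j:ℕ)+1, h⟩) (ν ⟨(j:ℕ)+1, h⟩) - ρ ⟨(j:ℕ)+1, h⟩
    else A - ρ Z with hκdef
  have hκpos : ∀ (j : Fin d) (h : (j:ℕ)+1 < d),
      κ j = min (μ j) (ν j) + max (μ ⟨(j:ℕ)+1, h⟩) (ν ⟨(j:ℕ)+1, h⟩) - ρ ⟨(j:ℕ)+1, h⟩ :=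
    fun j h => dif_pos h
  have hκL : κ L = A - ρ Z := dif_neg (by simp only [hL]; omega)
  have hjL : ∀ j : Fin d, ¬ ((j:ℕ)+1 < d) → j = L := by
    intro j hj; apply Fin.ext; have := j.isLt; simp only [hL]; omega
  have hμρ1 := hμρ.1
  have hνρ1 := hνρ.1
  have hμρ2 := hμρ.2
  have hνρ2 := hνρ.2
  -- κ interlaces any τ squeezed between min and max of μ, ν that interlaces ρ
  have hint : ∀ (τ : Fin d → ℕ), (∀ j, min (μ j) (ν j) ≤ τ j ∧ τ j ≤ max (μ j) (ν j)) →
      Interlace d κ τ := by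
    intro τ hτ
    constructor
    · intro j
      by_cases h : (j:ℕ)+1 < d
      · rw [hκpos j h]
        have h2 : μ ⟨(j:ℕ)+1, h⟩ ≤ ρ ⟨(j:ℕ)+1, h⟩ := hμρ1 _
        have h3 : ν ⟨(j:ℕ)+1, h⟩ ≤ ρ ⟨(j:ℕ)+1, h⟩ := hνρ1 _
        have h4 := (hτ j).1
        omega
      · rw [hjL j h, hκL, hA]
        have h2 : μ Z ≤ ρ Z := hμρ1 _
        have h3 : ν Z ≤ ρ Z := hνρ1 _
        have h4 := (hτ L).1
        omega
    · intro j h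
      rw [hκpos j h]
      have h2 : ρ ⟨(j:ℕ)+1, h⟩ ≤ μ j := hμρ2 j h
      have h3 : ρ ⟨(j:ℕ)+1, h⟩ ≤ ν j := hνρ2 j h
      have h4 := (hτ ⟨(j:ℕ)+1, h⟩).2
      omega
  have hintμ : Interlace d κ μ := hint μ (fun j => ⟨min_le_left _ _, le_max_left _ _⟩)
  have hintν : Interlace d κ ν := hint ν (fun j => ⟨min_le_right _ _, le_max_right _ _⟩)
  have hantκ : Antitone κ := by
    apply antitone_of_step
    intro j hj
    exact le_trans (hintμ.1 ⟨(j:ℕ)+1, hj⟩) (hintμ.2 j hj)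
  refine ⟨⟨κ, ρ Z - A⟩, ⟨hantκ, hintμ, hintν, ?_, ?_, ?_⟩, ?_⟩
  · -- disjunction
    show κ L = 0 ∨ ρ Z - A = 0
    rw [hκL]; omega
  · -- first equation
    show ρ Z + κ L = (ρ Z - A) + min (μ L) (ν L) + max (μ Z) (ν Z)
    rw [hκL]
    have h2 : μ Z ≤ ρ Z := hμρ1 _
    have h4 : min (μ L) (ν L) ≤ μ L := min_le_left _ _
    have h5 : μ L ≤ μ Z := hμ (by simp [hL, hZ, Fin.mk_le_mk])
    omega
  · -- the other equations
    intro i hi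
    show ρ i + κ ⟨(i:ℕ) - 1, _⟩ = _
    have him1 : (i:ℕ) - 1 + 1 < d := by have := i.isLt; omega
    have hieq : (⟨(i:ℕ) - 1 + 1, him1⟩ : Fin d) = i := Fin.ext (by simp; omega)
    rw [hκpos ⟨(i:ℕ) - 1, lt_of_le_of_lt (Nat.sub_le _ _) i.isLt⟩ him1]
    simp only [hieq]
    have h2 : ρ i ≤ μ ⟨(i:ℕ) - 1, lt_of_le_of_lt (Nat.sub_le _ _) i.isLt⟩ := by
      have := hμρ2 ⟨(i:ℕ) - 1, lt_of_le_of_lt (Nat.sub_le _ _) i.isLt⟩ him1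
      rwa [hieq] at this
    have h3 : ρ i ≤ ν ⟨(i:ℕ) - 1, lt_of_le_of_lt (Nat.sub_le _ _) i.isLt⟩ := by
      have := hνρ2 ⟨(i:ℕ) - 1, lt_of_le_of_lt (Nat.sub_le _ _) i.isLt⟩ him1
      rwa [hieq] at this
    omega
  · -- uniqueness
    rintro ⟨κ', m'⟩ ⟨hant', hiμ', hiν', hdisj', heq0', heqi'⟩
    have hm' : m' = ρ Z - A := by
      simp only at heq0' hdisj'
      omega
    have hκ' : κ' = κ := by
      funext j
      by_cases h : (j:ℕ)+1 < d
      · have := heqi' ⟨(j:ℕ)+1, h⟩ (by simp)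
        simp only at this
        have hjeq : ∀ hh : (j:ℕ)+1 - 1 < d, (⟨(j:ℕ)+1 - 1, hh⟩ : Fin d) = j :=
          fun hh => Fin.ext (by simp)
        rw [hjeq] at this
        rw [hκpos j h]
        have h2 : ρ ⟨(j:ℕ)+1, h⟩ ≤ μ j := hμρ2 j h
        omega
      · rw [hjL j h, hκL]
        simp only at heq0' hdisj'
        omega
    simp only [Prod.mk.injEq]
    exact ⟨hκ', hm'⟩
end

section
/- Fix a positive integer d, a nonnegative integer L, and type sequences w, v ∈ {+,−}^k having the same number of '+' entries p and the same number of '−' entries q. Fix d-staircases μ and λ, and vectors a ∈ ℕ^p, b ∈ ℕ^q. Then the number of skew d-semistandard w-oscillating tableaux with inner shape μ, outer shape λ, wt⁺ = a, wt⁻ = b, and minimum cylindric width at most L equals the number of skew d-semistandard v-oscillating tableaux with inner shape μ, outer shape λ, wt⁺ = a, wt⁻ = b, and minimum cylindric width at most L. -/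
/-- `α ≺ β` for `d`-staircases: `β₁ ≥ α₁ ≥ β₂ ≥ α₂ ≥ ⋯ ≥ β_d ≥ α_d` (0-indexed). -/
def IntInterlace (d : ℕ) (α β : Fin d → ℤ) : Prop :=
  (∀ i, α i ≤ β i) ∧ ∀ i : Fin d, ∀ h : (i : ℕ) + 1 < d, β ⟨(i : ℕ) + 1, h⟩ ≤ α i

/-- `α ≺_{(d,L)} β` for `d`-staircases: additionally `α_d ≥ β₁ - L`. -/
def IntCylInterlace (d L : ℕ) (α β : Fin d → ℤ) : Prop :=
  IntInterlace d α β ∧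
    ∀ h : 0 < d, β ⟨0, h⟩ - (L : ℤ) ≤ α ⟨d - 1, Nat.sub_lt h Nat.one_pos⟩

/-- `T` is a skew `d`-semistandard `w`-oscillating tableau with inner shape `μ`, outer
shape `lam`, and minimum cylindric width at most `L`: a sequence of `d`-staircases with
`λ⁽ⁱ⁻¹⁾ ≺_{(d,L)} λ⁽ⁱ⁾` when `w i = +` (here `true`) and `λ⁽ⁱ⁾ ≺_{(d,L)} λ⁽ⁱ⁻¹⁾` when
`w i = −` (here `false`). -/
def IsSkewCylOsc (d L k : ℕ) (w : Fin k → Bool) (μ lam : Fin d → ℤ)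
    (T : Fin (k + 1) → Fin d → ℤ) : Prop :=
  (∀ i, Antitone (T i)) ∧ T 0 = μ ∧ T (Fin.last k) = lam ∧
  ∀ i : Fin k,
    if w i then IntCylInterlace d L (T i.castSucc) (T i.succ)
    else IntCylInterlace d L (T i.succ) (T i.castSucc)

/-- `T` has `wt⁺ = a`: for each `i`, the size increase across the `i`-th occurrence of
`+` in `w` is `a i`. -/
def HasWtPlus (d k p : ℕ) (w : Fin k → Bool)
    (hp : (Finset.univ.filter fun i : Fin k => w i = true).card = p)
    (T : Fin (k + 1) → Fin d → ℤ) (a : Fin p → ℕ) : Prop :=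
  ∀ i : Fin p,
    (∑ j, T (Fin.succ ((Finset.univ.filter fun i : Fin k => w i = true).orderIsoOfFin hp i).1) j) =
    (∑ j, T (Fin.castSucc
        ((Finset.univ.filter fun i : Fin k => w i = true).orderIsoOfFin hp i).1) j) + (a i : ℤ)

/-- `T` has `wt⁻ = b`: for each `i`, the size decrease across the `i`-th-to-last
occurrence of `−` in `w` is `b i`. -/
def HasWtMinus (d k q : ℕ) (w : Fin k → Bool)
    (hq : (Finset.univ.filter fun i : Fin k => w i = false).card = q)
    (T : Fin (k + 1) → Fin d → ℤ) (b : Fin q → ℕ) : Prop :=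
  ∀ i : Fin q,
    (∑ j, T (Fin.castSucc
        ((Finset.univ.filter fun i : Fin k => w i = false).orderIsoOfFin hq i.rev).1) j) =
    (∑ j, T (Fin.succ
        ((Finset.univ.filter fun i : Fin k => w i = false).orderIsoOfFin hq i.rev).1) j) + (b i : ℤ)


/-!
Exchanging an adjacent `+−` of the type sequence for `−+` changes only the shape between the
two steps: a peak `α ≺ γ ≻ β` becomes a valley `α ≻ δ ≺ β`. Read cyclically (indices mod `d`,
with the offset `ℓ_j = cylShift d L j`, which is `L` at the wrap-around and `0` elsewhere), the
peak conditions say exactly that `γ_{j+1} ∈ [max(α, β)_{j+1}, min(α, β)_j + ℓ_j]` and the valley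
conditions that `δ_j ∈ [max(α, β)_{j+1} - ℓ_j, min(α, β)_j]`. The rule
`δ_j = max(α, β)_{j+1} + min(α, β)_j - γ_{j+1}` reflects one interval onto the other, so it is a
bijection; it keeps `|γ| + |δ| = |α| + |β|`, so the two size increments trade places, as the
weights require. Each such exchange lowers the sum of the positions of the `−`'s, so every type
sequence is connected to the sorted one `−⋯−+⋯+`, which depends only on `p` and `q`.
-/

open Finset

lemma antitone_of_mk_succ_le {α : Type*} [Preorder α] {d : ℕ} {f : Fin d → α}
    (h : ∀ j : Fin d, ∀ hj : (j : ℕ) + 1 < d, f ⟨j + 1, hj⟩ ≤ f j) : Antitone f := by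
  cases d with
  | zero => exact fun x => x.elim0
  | succ n => exact Fin.antitone_iff_succ_le.2 fun i => h i.castSucc (by simp)

lemma IntInterlace.antitone_left {d : ℕ} {α β : Fin d → ℤ} (h : IntInterlace d α β) :
    Antitone α :=
  antitone_of_mk_succ_le fun j hj => (h.1 _).trans (h.2 j hj)

lemma IntInterlace.antitone_right {d : ℕ} {α β : Fin d → ℤ} (h : IntInterlace d α β) :
    Antitone β :=
  antitone_of_mk_succ_le fun j hj => (h.2 j hj).trans (h.1 j)

def cylShift (d L : ℕ) (j : Fin d) : ℤ := if (j : ℕ) + 1 < d then 0 else L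

lemma intCylInterlace_iff {d L : ℕ} {α β : Fin d → ℤ} :
    IntCylInterlace d L α β ↔
      (∀ j, α j ≤ β j) ∧ ∀ j, β (finRotate d j) ≤ α j + cylShift d L j := by
  cases d with
  | zero => simp [IntCylInterlace, IntInterlace]
  | succ n =>
    have hsucc (i : Fin n) (h) : (⟨(i : ℕ) + 1, h⟩ : Fin (n + 1)) = i.succ := rfl
    have hlast (h) : (⟨n, h⟩ : Fin (n + 1)) = Fin.last n := rfl
    simp [IntCylInterlace, IntInterlace, and_assoc, Fin.forall_fin_succ' (n := n), cylShift,
      hsucc, hlast]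

section GrowthRule

variable {d L : ℕ}

def peakToValley (d : ℕ) (α β γ : Fin d → ℤ) : Fin d → ℤ := fun j =>
  max (α (finRotate d j)) (β (finRotate d j)) + min (α j) (β j) - γ (finRotate d j)

def valleyToPeak (d : ℕ) (α β δ : Fin d → ℤ) : Fin d → ℤ := fun j =>
  max (α j) (β j) + min (α ((finRotate d).symm j)) (β ((finRotate d).symm j))
    - δ ((finRotate d).symm j)

lemma valleyToPeak_apply_finRotate (α β δ : Fin d → ℤ) (j : Fin d) :
    valleyToPeak d α β δ (finRotate d j) =
      max (α (finRotate d j)) (β (finRotate d j)) + min (α j) (β j) - δ j := by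
  simp only [valleyToPeak, Equiv.symm_apply_apply]

lemma valleyToPeak_peakToValley (α β γ : Fin d → ℤ) :
    valleyToPeak d α β (peakToValley d α β γ) = γ := by
  ext j
  simp only [valleyToPeak, peakToValley, Equiv.apply_symm_apply]
  ring

lemma peakToValley_valleyToPeak (α β δ : Fin d → ℤ) :
    peakToValley d α β (valleyToPeak d α β δ) = δ := by
  ext j
  simp only [valleyToPeak, peakToValley, Equiv.symm_apply_apply]
  ring

lemma peakToValley_comm (α β γ : Fin d → ℤ) :
    peakToValley d α β γ = peakToValley d β α γ := by
  ext j
  simp only [peakToValley, max_comm, min_comm]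

lemma valleyToPeak_comm (α β δ : Fin d → ℤ) :
    valleyToPeak d α β δ = valleyToPeak d β α δ := by
  ext j
  simp only [valleyToPeak, max_comm, min_comm]

lemma sum_peakToValley (α β γ : Fin d → ℤ) :
    ∑ j, peakToValley d α β γ j = ∑ j, α j + ∑ j, β j - ∑ j, γ j := by
  have hrot := Equiv.sum_comp (finRotate d) fun j => max (α j) (β j) - γ j
  calc ∑ j, peakToValley d α β γ j
      = ∑ j, (max (α (finRotate d j)) (β (finRotate d j)) - γ (finRotate d j))
          + ∑ j, min (α j) (β j) := by
        rw [← sum_add_distrib]; exact sum_congr rfl fun j _ => by simp only [peakToValley]; ring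
    _ = ∑ j, (max (α j) (β j) + min (α j) (β j) - γ j) := by
        rw [hrot, ← sum_add_distrib]; exact sum_congr rfl fun j _ => by ring
    _ = ∑ j, α j + ∑ j, β j - ∑ j, γ j := by
        simp only [max_add_min, sum_sub_distrib, sum_add_distrib]

lemma peakToValley_interlace_left {α β γ : Fin d → ℤ}
    (hα : IntCylInterlace d L α γ) (hβ : IntCylInterlace d L β γ) :
    IntCylInterlace d L (peakToValley d α β γ) α := by
  rw [intCylInterlace_iff] at *
  refine ⟨fun j => ?_, fun j => ?_⟩ <;>
  · have := hα.1 (finRotate d j); have := hβ.1 (finRotate d j)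
    have := hα.2 j; have := hβ.2 j
    simp only [peakToValley]
    omega

lemma valleyToPeak_interlace_left {α β δ : Fin d → ℤ}
    (hα : IntCylInterlace d L δ α) (hβ : IntCylInterlace d L δ β) :
    IntCylInterlace d L α (valleyToPeak d α β δ) := by
  rw [intCylInterlace_iff] at *
  refine ⟨(finRotate d).forall_congr_right.1 fun j => ?_, fun j => ?_⟩ <;>
  · have := hα.1 j; have := hβ.1 j
    have := hα.2 j; have := hβ.2 j
    rw [valleyToPeak_apply_finRotate]
    omega

end GrowthRule

lemma Finset.orderEmbOfFin_image_apply {α β : Type*} [LinearOrder α] [LinearOrder β]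
    {s : Finset α} {t : Finset β} {f : α → β} (hf : StrictMonoOn f s) (hst : s.image f = t)
    {n : ℕ} (hs : s.card = n) (ht : t.card = n) (i : Fin n) :
    t.orderEmbOfFin ht i = f (s.orderEmbOfFin hs i) := by
  subst hst
  refine (congrFun (orderEmbOfFin_unique ht (fun i => mem_image_of_mem f
    (orderEmbOfFin_mem s hs i)) fun i j hij => hf (orderEmbOfFin_mem s hs i)
      (orderEmbOfFin_mem s hs j) ((s.orderEmbOfFin hs).strictMono hij)) i).symm

lemma image_filter_eq_of_perm {k : ℕ} {w v : Fin k → Bool} {e : Equiv.Perm (Fin k)}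
    (hv : ∀ x, v (e x) = w x) (c : Bool) :
    (univ.filter fun x => w x = c).image e = univ.filter fun x => v x = c := by
  ext y
  obtain ⟨x, rfl⟩ := e.surjective y
  simp [hv, e.injective.eq_iff]

lemma strictMonoOn_swap_of_val_eq_succ {k : ℕ} {i j : Fin k} (hij : (j : ℕ) = i + 1)
    {s : Set (Fin k)} (hs : ¬(i ∈ s ∧ j ∈ s)) : StrictMonoOn (Equiv.swap i j) s := by
  intro x hx y hy hxy
  rw [Fin.lt_def] at hxy ⊢
  rw [Equiv.swap_apply_def, Equiv.swap_apply_def]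
  split_ifs <;> simp_all [Fin.ext_iff] <;> omega

def sizeJump {d k : ℕ} (T : Fin (k + 1) → Fin d → ℤ) (l : Fin k) : ℤ :=
  ∑ x, T l.succ x - ∑ x, T l.castSucc x

section Weights

variable {d k : ℕ} {w v : Fin k → Bool} {T T' : Fin (k + 1) → Fin d → ℤ}

lemma hasWtPlus_iff {p : ℕ} (hp : (univ.filter fun i => w i = true).card = p) (a : Fin p → ℕ) :
    HasWtPlus d k p w hp T a ↔
      ∀ t, sizeJump T ((univ.filter fun i => w i = true).orderEmbOfFin hp t) = a t := by
  simp only [HasWtPlus, sizeJump, coe_orderIsoOfFin_apply, sub_eq_iff_eq_add']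

lemma hasWtMinus_iff {q : ℕ} (hq : (univ.filter fun i => w i = false).card = q)
    (b : Fin q → ℕ) :
    HasWtMinus d k q w hq T b ↔
      ∀ t, sizeJump T ((univ.filter fun i => w i = false).orderEmbOfFin hq t.rev) = -b t := by
  simp only [HasWtMinus, sizeJump, coe_orderIsoOfFin_apply]
  exact forall_congr' fun t => by omega

variable {e : Equiv.Perm (Fin k)}

lemma hasWtPlus_iff_of_perm {p : ℕ} (hv : ∀ x, v (e x) = w x)
    (hjump : ∀ x, sizeJump T' (e x) = sizeJump T x) (he : StrictMonoOn e {x | w x = true})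
    (hwp : (univ.filter fun i => w i = true).card = p)
    (hvp : (univ.filter fun i => v i = true).card = p) (a : Fin p → ℕ) :
    HasWtPlus d k p v hvp T' a ↔ HasWtPlus d k p w hwp T a := by
  rw [hasWtPlus_iff, hasWtPlus_iff]
  refine forall_congr' fun t => ?_
  rw [orderEmbOfFin_image_apply (by simpa using he) (image_filter_eq_of_perm hv true) hwp hvp,
    hjump]

lemma hasWtMinus_iff_of_perm {q : ℕ} (hv : ∀ x, v (e x) = w x)
    (hjump : ∀ x, sizeJump T' (e x) = sizeJump T x) (he : StrictMonoOn e {x | w x = false})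
    (hwq : (univ.filter fun i => w i = false).card = q)
    (hvq : (univ.filter fun i => v i = false).card = q) (b : Fin q → ℕ) :
    HasWtMinus d k q v hvq T' b ↔ HasWtMinus d k q w hwq T b := by
  rw [hasWtMinus_iff, hasWtMinus_iff]
  refine forall_congr' fun t => ?_
  rw [orderEmbOfFin_image_apply (by simpa using he) (image_filter_eq_of_perm hv false) hwq hvq,
    hjump]

end Weights

lemma Fin.castSucc_eq_succ_of_val_eq_succ {k : ℕ} {i j : Fin k} (hij : (j : ℕ) = i + 1) :
    j.castSucc = i.succ :=
  Fin.ext (by simp [hij])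

lemma Fin.succ_ne_succ_of_val_eq_succ {k : ℕ} {i j : Fin k} (hij : (j : ℕ) = i + 1) :
    j.succ ≠ i.succ :=
  (Fin.succ_injective _).ne (Fin.ne_of_val_ne (by omega))

def peakValleyEquiv {d k : ℕ} (i j : Fin k) (hij : (j : ℕ) = i + 1) :
    (Fin (k + 1) → Fin d → ℤ) ≃ (Fin (k + 1) → Fin d → ℤ) where
  toFun T := Function.update T i.succ (peakToValley d (T i.castSucc) (T j.succ) (T i.succ))
  invFun T := Function.update T i.succ (valleyToPeak d (T i.castSucc) (T j.succ) (T i.succ))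
  left_inv T := by
    simp [Fin.castSucc_lt_succ.ne, Fin.succ_ne_succ_of_val_eq_succ hij, valleyToPeak_peakToValley]
  right_inv T := by
    simp [Fin.castSucc_lt_succ.ne, Fin.succ_ne_succ_of_val_eq_succ hij, peakToValley_valleyToPeak]

noncomputable def oscCount (d L k p q : ℕ) (w : Fin k → Bool)
    (hwp : (univ.filter fun i => w i = true).card = p)
    (hwq : (univ.filter fun i => w i = false).card = q)
    (μ lam : Fin d → ℤ) (a : Fin p → ℕ) (b : Fin q → ℕ) : ℕ :=
  Nat.card {T : Fin (k + 1) → Fin d → ℤ //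
    IsSkewCylOsc d L k w μ lam T ∧ HasWtPlus d k p w hwp T a ∧ HasWtMinus d k q w hwq T b}

section AdjacentSwap

variable {d L k : ℕ} {w : Fin k → Bool} {μ lam : Fin d → ℤ} {T : Fin (k + 1) → Fin d → ℤ}
  {i j : Fin k}

lemma IsSkewCylOsc.interlace_of_true (hT : IsSkewCylOsc d L k w μ lam T) {l : Fin k}
    (hl : w l = true) : IntCylInterlace d L (T l.castSucc) (T l.succ) := by
  simpa [hl] using hT.2.2.2 l

lemma IsSkewCylOsc.interlace_of_false (hT : IsSkewCylOsc d L k w μ lam T) {l : Fin k}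
    (hl : w l = false) : IntCylInterlace d L (T l.succ) (T l.castSucc) := by
  simpa [hl] using hT.2.2.2 l

lemma IsSkewCylOsc.update_swap (hT : IsSkewCylOsc d L k w μ lam T) (hij : (j : ℕ) = i + 1)
    {X : Fin d → ℤ}
    (hi : if w j then IntCylInterlace d L (T i.castSucc) X
      else IntCylInterlace d L X (T i.castSucc))
    (hj : if w i then IntCylInterlace d L X (T j.succ) else IntCylInterlace d L (T j.succ) X) :
    IsSkewCylOsc d L k (w ∘ Equiv.swap i j) μ lam (Function.update T i.succ X) := by
  obtain ⟨hanti, h0, hlast, hstep⟩ := hT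
  have hji := Fin.castSucc_eq_succ_of_val_eq_succ hij
  have hX : Antitone X := by
    split_ifs at hi
    exacts [hi.1.antitone_right, hi.1.antitone_left]
  refine ⟨fun x => ?_, ?_, ?_, fun l => ?_⟩
  · rcases eq_or_ne x i.succ with rfl | hx
    · simpa using hX
    · simpa [hx] using hanti x
  · simpa [(Fin.succ_ne_zero i).symm] using h0
  · simpa [← hji, (Fin.castSucc_lt_last j).ne'] using hlast
  · rcases eq_or_ne l i with rfl | hli
    · simpa [Fin.castSucc_lt_succ.ne] using hi
    rcases eq_or_ne l j with rfl | hlj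
    · simpa [hji, Fin.succ_ne_succ_of_val_eq_succ hij] using hj
    · have hc : l.castSucc ≠ i.succ := hji ▸ (Fin.castSucc_injective _).ne hlj
      have hs : l.succ ≠ i.succ := (Fin.succ_injective _).ne hli
      simpa [Equiv.swap_apply_of_ne_of_ne hli hlj, hc, hs] using hstep l

lemma sizeJump_update_swap (hij : (j : ℕ) = i + 1) {X : Fin d → ℤ}
    (hX : ∑ x, X x = ∑ x, T i.castSucc x + ∑ x, T j.succ x - ∑ x, T i.succ x) (l : Fin k) :
    sizeJump (Function.update T i.succ X) (Equiv.swap i j l) = sizeJump T l := by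
  have hji := Fin.castSucc_eq_succ_of_val_eq_succ hij
  rcases eq_or_ne l i with rfl | hli
  · simp only [sizeJump, Equiv.swap_apply_left, Function.update_self, hji, hX,
      Function.update_of_ne (Fin.succ_ne_succ_of_val_eq_succ hij)]
    ring
  rcases eq_or_ne l j with rfl | hlj
  · simp only [sizeJump, Equiv.swap_apply_right, Function.update_self, hji, hX,
      Function.update_of_ne Fin.castSucc_lt_succ.ne]
    ring
  · have hc : l.castSucc ≠ i.succ := hji ▸ (Fin.castSucc_injective _).ne hlj
    have hs : l.succ ≠ i.succ := (Fin.succ_injective _).ne hli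
    simp [sizeJump, Equiv.swap_apply_of_ne_of_ne hli hlj, hc, hs]

lemma peakValleyEquiv_apply (hij : (j : ℕ) = i + 1) (T : Fin (k + 1) → Fin d → ℤ) :
    peakValleyEquiv i j hij T =
      Function.update T i.succ (peakToValley d (T i.castSucc) (T j.succ) (T i.succ)) :=
  rfl

lemma peakValleyEquiv_symm_apply (hij : (j : ℕ) = i + 1) (T : Fin (k + 1) → Fin d → ℤ) :
    (peakValleyEquiv i j hij).symm T =
      Function.update T i.succ (valleyToPeak d (T i.castSucc) (T j.succ) (T i.succ)) :=
  rfl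

lemma isSkewCylOsc_peakValleyEquiv_iff (hij : (j : ℕ) = i + 1) (hwi : w i = true)
    (hwj : w j = false) :
    IsSkewCylOsc d L k (w ∘ Equiv.swap i j) μ lam (peakValleyEquiv i j hij T) ↔
      IsSkewCylOsc d L k w μ lam T := by
  have hji := Fin.castSucc_eq_succ_of_val_eq_succ hij
  constructor
  · intro hS
    rw [← (peakValleyEquiv i j hij).symm_apply_apply T, peakValleyEquiv_symm_apply]
    generalize peakValleyEquiv i j hij T = S at hS ⊢
    have hi := hS.interlace_of_false (l := i) (by simpa using hwj)
    have hj := hS.interlace_of_true (l := j) (by simpa using hwi)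
    rw [hji] at hj
    have hw : (w ∘ Equiv.swap i j) ∘ Equiv.swap i j = w := by ext; simp
    have := hS.update_swap hij
      (by simpa [hwi] using valleyToPeak_interlace_left hi hj)
      (by simpa [hwj, valleyToPeak_comm] using valleyToPeak_interlace_left hj hi)
    rwa [hw] at this
  · intro hT
    have hi := hT.interlace_of_true hwi
    have hj := hT.interlace_of_false hwj
    rw [hji] at hj
    exact hT.update_swap hij (by simpa [hwj] using peakToValley_interlace_left hi hj)
      (by simpa [hwi, peakToValley_comm] using peakToValley_interlace_left hj hi)

lemma oscCount_swap {p q : ℕ} (hij : (j : ℕ) = i + 1) (hwi : w i = true) (hwj : w j = false)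
    (hwp : (univ.filter fun i => w i = true).card = p)
    (hwq : (univ.filter fun i => w i = false).card = q)
    (hvp : (univ.filter fun l => (w ∘ Equiv.swap i j) l = true).card = p)
    (hvq : (univ.filter fun l => (w ∘ Equiv.swap i j) l = false).card = q)
    (a : Fin p → ℕ) (b : Fin q → ℕ) :
    oscCount d L k p q w hwp hwq μ lam a b =
      oscCount d L k p q (w ∘ Equiv.swap i j) hvp hvq μ lam a b := by
  refine Nat.card_congr (Equiv.subtypeEquiv (peakValleyEquiv i j hij) fun T => ?_)
  have hv (x : Fin k) : (w ∘ Equiv.swap i j) (Equiv.swap i j x) = w x := by simp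
  have hmono (c : Bool) : StrictMonoOn (Equiv.swap i j) {x | w x = c} :=
    strictMonoOn_swap_of_val_eq_succ hij fun ⟨hi, hj⟩ => by simp_all
  have hjump := sizeJump_update_swap (T := T) hij (sum_peakToValley _ _ _)
  rw [isSkewCylOsc_peakValleyEquiv_iff hij hwi hwj, peakValleyEquiv_apply,
    hasWtPlus_iff_of_perm hv hjump (hmono true) hwp hvp,
    hasWtMinus_iff_of_perm hv hjump (hmono false) hwq hvq]

end AdjacentSwap

section Words

variable {k : ℕ}

lemma Monotone.eq_false_iff_lt_card {w : Fin k → Bool} (hw : Monotone w) (x : Fin k) :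
    w x = false ↔ (x : ℕ) < (univ.filter fun y => w y = false).card := by
  constructor
  · intro hx
    have hsub : Iic x ⊆ univ.filter fun y => w y = false := fun y hy => by
      simpa [hx] using Bool.le_iff_imp.1 (hw (mem_Iic.1 hy))
    simpa using card_le_card hsub
  · intro hx
    by_contra hx'
    have hsub : (univ.filter fun y => w y = false) ⊆ Iio x := fun y hy => by
      simp only [mem_filter, mem_univ, true_and] at hy
      exact mem_Iio.2 (lt_of_not_ge fun hxy => by
        simpa [hy] using Bool.le_iff_imp.1 (hw hxy) (by simpa using hx'))
    simpa using (card_le_card hsub).trans_lt' hx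

lemma Monotone.eq_of_card_filter_false {w v : Fin k → Bool} (hw : Monotone w) (hv : Monotone v)
    (h : (univ.filter fun x => w x = false).card = (univ.filter fun x => v x = false).card) :
    w = v := by
  ext x
  have := (hw.eq_false_iff_lt_card x).trans (h ▸ (hv.eq_false_iff_lt_card x).symm)
  cases hwx : w x <;> cases hvx : v x <;> simp_all

lemma exists_descent_of_not_monotone {w : Fin k → Bool} (hw : ¬Monotone w) :
    ∃ i j : Fin k, (j : ℕ) = i + 1 ∧ w i = true ∧ w j = false := by
  cases k with
  | zero => exact absurd (fun x => x.elim0) hw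
  | succ n =>
    obtain ⟨i, hi⟩ := not_forall.1 (mt Fin.monotone_iff_le_succ.2 hw)
    obtain ⟨hsucc, hcast⟩ := Bool.lt_iff.1 (not_le.1 hi)
    exact ⟨i.castSucc, i.succ, by simp, hcast, hsucc⟩

lemma card_filter_comp_perm (w : Fin k → Bool) (e : Equiv.Perm (Fin k)) (c : Bool) :
    (univ.filter fun x => (w ∘ e) x = c).card = (univ.filter fun x => w x = c).card := by
  rw [← image_filter_eq_of_perm (w := w) (e := e.symm) (by simp) c,
    card_image_of_injective _ e.symm.injective]

lemma sum_filter_false_swap_lt {w : Fin k → Bool} {i j : Fin k} (hij : (j : ℕ) = i + 1)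
    (hwi : w i = true) (hwj : w j = false) :
    ∑ x ∈ univ.filter (fun x => (w ∘ Equiv.swap i j) x = false), (x : ℕ) <
      ∑ x ∈ univ.filter (fun x => w x = false), (x : ℕ) := by
  rw [← image_filter_eq_of_perm (w := w) (e := Equiv.swap i j) (by simp),
    sum_image fun _ _ _ _ h => (Equiv.swap i j).injective h]
  refine sum_lt_sum (fun x hx => ?_) ⟨j, by simpa using hwj, by simp [hij]⟩
  have hxi : x ≠ i := by rintro rfl; simp_all
  rcases eq_or_ne x j with rfl | hxj
  · simp [hij]
  · simp [Equiv.swap_apply_of_ne_of_ne hxi hxj]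

end Words

lemma exists_monotone_oscCount_eq (d L k p q : ℕ) (μ lam : Fin d → ℤ) (a : Fin p → ℕ)
    (b : Fin q → ℕ) (w : Fin k → Bool) (hwp : (univ.filter fun i => w i = true).card = p)
    (hwq : (univ.filter fun i => w i = false).card = q) :
    ∃ (u : Fin k → Bool) (hup : (univ.filter fun i => u i = true).card = p)
      (huq : (univ.filter fun i => u i = false).card = q),
      Monotone u ∧
        oscCount d L k p q w hwp hwq μ lam a b = oscCount d L k p q u hup huq μ lam a b := by
  induction hn : ∑ x ∈ univ.filter (fun x => w x = false), (x : ℕ) using Nat.strong_induction_on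
    generalizing w with
  | _ n ih =>
    by_cases hw : Monotone w
    · exact ⟨w, hwp, hwq, hw, rfl⟩
    obtain ⟨i, j, hij, hwi, hwj⟩ := exists_descent_of_not_monotone hw
    have hvp := (card_filter_comp_perm w (Equiv.swap i j) true).trans hwp
    have hvq := (card_filter_comp_perm w (Equiv.swap i j) false).trans hwq
    obtain ⟨u, hup, huq, hu, hcount⟩ :=
      ih _ (hn ▸ sum_filter_false_swap_lt hij hwi hwj) _ hvp hvq rfl
    exact ⟨u, hup, huq, hu, (oscCount_swap hij hwi hwj hwp hwq hvp hvq a b).trans hcount⟩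

theorem skew_dRSK_count_independent_of_type_sequence_general
    (d L k p q : ℕ) (w v : Fin k → Bool)
    (hwp : (Finset.univ.filter fun i : Fin k => w i = true).card = p)
    (hwq : (Finset.univ.filter fun i : Fin k => w i = false).card = q)
    (hvp : (Finset.univ.filter fun i : Fin k => v i = true).card = p)
    (hvq : (Finset.univ.filter fun i : Fin k => v i = false).card = q)
    (μ lam : Fin d → ℤ)
    (a : Fin p → ℕ) (b : Fin q → ℕ) :
    Nat.card {T : Fin (k + 1) → Fin d → ℤ //
        IsSkewCylOsc d L k w μ lam T ∧ HasWtPlus d k p w hwp T a ∧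
        HasWtMinus d k q w hwq T b} =
    Nat.card {T : Fin (k + 1) → Fin d → ℤ //
        IsSkewCylOsc d L k v μ lam T ∧ HasWtPlus d k p v hvp T a ∧
        HasWtMinus d k q v hvq T b} := by
  obtain ⟨u, hup, huq, hu, hw⟩ := exists_monotone_oscCount_eq d L k p q μ lam a b w hwp hwq
  obtain ⟨u', hup', huq', hu', hv⟩ := exists_monotone_oscCount_eq d L k p q μ lam a b v hvp hvq
  obtain rfl : u = u' := hu.eq_of_card_filter_false hu' (huq.trans huq'.symm)
  exact hw.trans hv.symm

/-- Skew `d`-RSK invariance: for type sequences `w`, `v` with the same number of `+`'s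
and `−`'s, the number of skew `d`-semistandard `w`-oscillating tableaux with given inner
shape, outer shape, weights and minimum cylindric width at most `L` equals the
corresponding number for `v`. -/
theorem skew_dRSK_count_independent_of_type_sequence
    (d L k p q : ℕ) (hd : 0 < d) (w v : Fin k → Bool)
    (hwp : (Finset.univ.filter fun i : Fin k => w i = true).card = p)
    (hwq : (Finset.univ.filter fun i : Fin k => w i = false).card = q)
    (hvp : (Finset.univ.filter fun i : Fin k => v i = true).card = p)
    (hvq : (Finset.univ.filter fun i : Fin k => v i = false).card = q)
    (μ lam : Fin d → ℤ) (hμ : Antitone μ) (hlam : Antitone lam)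
    (a : Fin p → ℕ) (b : Fin q → ℕ) :
    Nat.card {T : Fin (k + 1) → Fin d → ℤ //
        IsSkewCylOsc d L k w μ lam T ∧ HasWtPlus d k p w hwp T a ∧
        HasWtMinus d k q w hwq T b} =
    Nat.card {T : Fin (k + 1) → Fin d → ℤ //
        IsSkewCylOsc d L k v μ lam T ∧ HasWtPlus d k p v hvp T a ∧
        HasWtMinus d k q v hvq T b} :=
  skew_dRSK_count_independent_of_type_sequence_general d L k p q w v hwp hwq hvp hvq μ lam a b
end

section
/- Let d and L be positive integers and set M = d + L. For any distinct integers t_1, …, t_d in {1, …, M}, we have |Σ_{l=1}^{d} e^{2πi t_l/M}| ≤ sin(πd/M)/sin(π/M), and equality holds if and only if the residues t_1, …, t_d modulo M form a set of d consecutive residues modulo M (i.e., there is an integer s with {t_1,…,t_d} ≡ {s+1, s+2, …, s+d} (mod M)). -/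
/-!
Put `e(x) = exp (2πix/M)` and `Z = ∑ₗ e(tₗ)`, and write `arg Z = 2πφ/M`. Rotating `Z` onto the
positive real axis gives `|Z| = ∑ cos (2π|y - φ|/M)`, summed over representatives `y` of the
residues `tₗ` taken within distance `M/2` of `φ`. Since `r ↦ cos (2πr/M)` is strictly decreasing
on `[0, M/2]`, exchanging representatives for the `d` integers nearest to `φ` can only increase the
sum; those integers are consecutive, and the rotated sum over them is at most the norm of a
geometric sum, which is `sin (πd/M) / sin (π/M)`. In the equality case every exchanged integer lies
at distance exactly `d/2` from `φ`, so the representatives are `d` consecutive integers.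
-/

open Finset
open scoped Real

section Exchange

variable {ι G : Type*} [DecidableEq ι] [AddCommGroup G] [PartialOrder G]
  [IsOrderedAddMonoid G] {S T : Finset ι} {f : ι → G} {c : G}

lemma sum_sdiff_le_card_nsmul_le_sum_sdiff (hST : #S = #T) (hS : ∀ y ∈ S \ T, f y ≤ c)
    (hT : ∀ x ∈ T \ S, c ≤ f x) :
    ∑ y ∈ S \ T, f y ≤ #(S \ T) • c ∧ #(S \ T) • c ≤ ∑ x ∈ T \ S, f x :=
  ⟨sum_le_card_nsmul _ _ _ hS, card_sdiff_comm hST ▸ card_nsmul_le_sum _ _ _ hT⟩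

lemma sum_le_sum_of_card_eq_of_sdiff (hST : #S = #T) (hS : ∀ y ∈ S \ T, f y ≤ c)
    (hT : ∀ x ∈ T \ S, c ≤ f x) : ∑ y ∈ S, f y ≤ ∑ x ∈ T, f x := by
  obtain ⟨h₁, h₂⟩ := sum_sdiff_le_card_nsmul_le_sum_sdiff hST hS hT
  exact sum_sdiff_le_sum_sdiff.mp (h₁.trans h₂)

lemma eq_of_sum_eq_sum_of_card_eq_of_sdiff (hST : #S = #T) (hS : ∀ y ∈ S \ T, f y ≤ c)
    (hT : ∀ x ∈ T \ S, c ≤ f x) (heq : ∑ y ∈ S, f y = ∑ x ∈ T, f x) :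
    (∀ y ∈ S \ T, f y = c) ∧ ∀ x ∈ T \ S, f x = c := by
  obtain ⟨h₁, h₂⟩ := sum_sdiff_le_card_nsmul_le_sum_sdiff hST hS hT
  have heq' : ∑ y ∈ S \ T, f y = ∑ x ∈ T \ S, f x := sum_sdiff_eq_sum_sdiff_iff.mpr heq
  refine ⟨(sum_eq_sum_iff_of_le hS).mp ?_, fun x hx => ((sum_eq_sum_iff_of_le hT).mp ?_ x hx).symm⟩
  · rw [sum_const]; exact le_antisymm h₁ (heq' ▸ h₂)
  · rw [sum_const, ← card_sdiff_comm hST]; exact le_antisymm h₂ (heq' ▸ h₁)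

end Exchange

section NearestIntegers

variable {φ : ℝ} {d : ℕ}

lemma abs_sub_le_of_mem_Ico_ceil {x : ℤ} (hx : x ∈ Ico ⌈φ - d / 2⌉ (⌈φ - d / 2⌉ + d)) :
    |x - φ| ≤ d / 2 ∧ (|x - φ| = d / 2 → x = ⌈φ - d / 2⌉) := by
  have h₁ := Int.le_ceil (φ - d / 2)
  have h₂ := Int.ceil_lt_add_one (φ - d / 2)
  obtain ⟨hax, hxa⟩ := mem_Ico.mp hx
  have hax' : (⌈φ - d / 2⌉ : ℝ) ≤ x := by exact_mod_cast hax
  have hxa' : (x : ℝ) + 1 ≤ ⌈φ - d / 2⌉ + d := by exact_mod_cast hxa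
  refine ⟨abs_le.mpr ⟨by linarith, by linarith⟩, fun h => ?_⟩
  have : (x : ℝ) = φ - d / 2 := by
    rcases abs_eq (by positivity) |>.mp h with h | h <;> linarith
  exact le_antisymm (by exact_mod_cast (show (x : ℝ) ≤ ⌈φ - d / 2⌉ by linarith)) hax

lemma le_abs_sub_of_notMem_Ico_ceil {y : ℤ} (hy : y ∉ Ico ⌈φ - d / 2⌉ (⌈φ - d / 2⌉ + d)) :
    d / 2 ≤ |y - φ| ∧ (|y - φ| = d / 2 → y = ⌈φ - d / 2⌉ + d) := by
  have h₁ := Int.le_ceil (φ - d / 2)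
  have h₂ := Int.ceil_lt_add_one (φ - d / 2)
  rw [mem_Ico, not_and_or, not_le, not_lt] at hy
  rcases hy with hy | hy
  · have hy' : (y : ℝ) + 1 ≤ ⌈φ - d / 2⌉ := by exact_mod_cast hy
    refine ⟨le_abs.mpr (Or.inr (by linarith)), fun h => absurd h (ne_of_gt ?_)⟩
    exact lt_abs.mpr (Or.inr (by linarith))
  · have hy' : (⌈φ - d / 2⌉ : ℝ) + d ≤ y := by exact_mod_cast hy
    refine ⟨le_abs.mpr (Or.inl (by linarith)), fun h => ?_⟩
    have : (y : ℝ) = φ + d / 2 := by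
      rcases abs_eq (by positivity) |>.mp h with h | h <;> linarith
    exact le_antisymm (by exact_mod_cast (show (y : ℝ) ≤ ⌈φ - d / 2⌉ + d by linarith)) hy

variable {g : ℝ → ℝ} {h : ℝ} {R : Finset ℤ}

lemma apply_abs_sub_le_of_notMem_Ico_ceil (hg : StrictAntiOn g (Set.Icc 0 h))
    (hdh : (d : ℝ) / 2 ≤ h) {y : ℤ} (hy : y ∉ Ico ⌈φ - d / 2⌉ (⌈φ - d / 2⌉ + d))
    (hyh : |y - φ| ≤ h) : g |y - φ| ≤ g (d / 2) :=
  hg.antitoneOn ⟨by positivity, hdh⟩ ⟨abs_nonneg _, hyh⟩ (le_abs_sub_of_notMem_Ico_ceil hy).1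

lemma apply_le_apply_abs_sub_of_mem_Ico_ceil (hg : StrictAntiOn g (Set.Icc 0 h))
    (hdh : (d : ℝ) / 2 ≤ h) {x : ℤ} (hx : x ∈ Ico ⌈φ - d / 2⌉ (⌈φ - d / 2⌉ + d)) :
    g (d / 2) ≤ g |x - φ| :=
  have hx := (abs_sub_le_of_mem_Ico_ceil hx).1
  hg.antitoneOn ⟨abs_nonneg _, hx.trans hdh⟩ ⟨by positivity, hdh⟩ hx

lemma sum_le_sum_Ico_ceil (hg : StrictAntiOn g (Set.Icc 0 h)) (hdh : (d : ℝ) / 2 ≤ h)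
    (hR : #R = d) (hRφ : ∀ y ∈ R, |y - φ| ≤ h) :
    ∑ y ∈ R, g |y - φ| ≤ ∑ x ∈ Ico ⌈φ - d / 2⌉ (⌈φ - d / 2⌉ + d), g |x - φ| :=
  sum_le_sum_of_card_eq_of_sdiff (hR.trans (by simp))
    (fun y hy => apply_abs_sub_le_of_notMem_Ico_ceil hg hdh (mem_sdiff.mp hy).2
      (hRφ y (mem_sdiff.mp hy).1))
    (fun _ hx => apply_le_apply_abs_sub_of_mem_Ico_ceil hg hdh (mem_sdiff.mp hx).1)

lemma subset_Ico_ceil_of_sum_eq (hg : StrictAntiOn g (Set.Icc 0 h)) (hdh : (d : ℝ) / 2 ≤ h)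
    (hR : #R = d) (hRφ : ∀ y ∈ R, |y - φ| ≤ h)
    (heq : ∑ y ∈ R, g |y - φ| = ∑ x ∈ Ico ⌈φ - d / 2⌉ (⌈φ - d / 2⌉ + d), g |x - φ|) :
    R ⊆ Ico ⌈φ - d / 2⌉ (⌈φ - d / 2⌉ + d) ∨
      R ⊆ Ico (⌈φ - d / 2⌉ + 1) (⌈φ - d / 2⌉ + 1 + d) := by
  set a := ⌈φ - d / 2⌉
  have hd : (0 : ℝ) ≤ d / 2 := by positivity
  have hST : #R = #(Ico a (a + d)) := hR.trans (by simp)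
  obtain ⟨hR', hT'⟩ := eq_of_sum_eq_sum_of_card_eq_of_sdiff hST
    (fun y hy => apply_abs_sub_le_of_notMem_Ico_ceil hg hdh (mem_sdiff.mp hy).2
      (hRφ y (mem_sdiff.mp hy).1))
    (fun x hx => apply_le_apply_abs_sub_of_mem_Ico_ceil hg hdh (mem_sdiff.mp hx).1) heq
  -- the only integers `z` with `g |z - φ| = g (d / 2)` are the endpoints `φ ∓ d / 2`
  have hRT : ∀ y ∈ R \ Ico a (a + d), y = a + d := fun y hy =>
    (le_abs_sub_of_notMem_Ico_ceil (mem_sdiff.mp hy).2).2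
      (hg.injOn ⟨abs_nonneg _, hRφ y (mem_sdiff.mp hy).1⟩ ⟨hd, hdh⟩ (hR' y hy))
  have hTR : ∀ x ∈ Ico a (a + d) \ R, x = a := fun x hx =>
    have hx' := abs_sub_le_of_mem_Ico_ceil (mem_sdiff.mp hx).1
    hx'.2 (hg.injOn ⟨abs_nonneg _, hx'.1.trans hdh⟩ ⟨hd, hdh⟩ (hT' x hx))
  by_cases hsub : R ⊆ Ico a (a + d)
  · exact Or.inl hsub
  obtain ⟨y, hyR, hyT⟩ := not_subset.mp hsub
  obtain ⟨x, hx⟩ : (Ico a (a + d) \ R).Nonempty := by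
    rw [← card_pos, ← card_sdiff_comm hST]
    exact card_pos.mpr ⟨y, mem_sdiff.mpr ⟨hyR, hyT⟩⟩
  have haR : a ∉ R := hTR x hx ▸ (mem_sdiff.mp hx).2
  refine Or.inr fun z hz => ?_
  by_cases hzT : z ∈ Ico a (a + d)
  · have := mem_Ico.mp hzT
    have : z ≠ a := fun h => haR (h ▸ hz)
    rw [mem_Ico]; omega
  · have := mem_Ico.mp (mem_sdiff.mp hx).1
    rw [hRT z (mem_sdiff.mpr ⟨hz, hzT⟩), mem_Ico]; omega

end NearestIntegers

lemma strictAntiOn_cos_two_pi_mul_div {M : ℝ} (hM : 0 < M) :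
    StrictAntiOn (fun r => Real.cos (2 * π * r / M)) (Set.Icc 0 (M / 2)) := by
  refine Real.strictAntiOn_cos.comp_strictMonoOn (fun r _ s _ hrs => by gcongr) fun r hr => ?_
  obtain ⟨h₀, h₁⟩ := hr
  refine ⟨by positivity, ?_⟩
  rw [div_le_iff₀ hM]
  nlinarith [Real.pi_pos]

lemma exp_neg_arg_mul_I_mul_self (z : ℂ) : Complex.exp (-(z.arg * Complex.I)) * z = ‖z‖ := by
  rw [Complex.exp_neg, inv_mul_eq_iff_eq_mul₀ (Complex.exp_ne_zero _)]
  exact (Complex.norm_mul_exp_arg_mul_I z).symm.trans (mul_comm _ _)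

lemma exists_perm_apply_eq_iff_image_univ_eq {ι α : Type*} [Fintype ι] [DecidableEq α]
    {f g : ι → α} (hf : Function.Injective f) :
    (∃ σ : Equiv.Perm ι, ∀ i, f (σ i) = g i) ↔ univ.image f = univ.image g := by
  constructor
  · rintro ⟨σ, hσ⟩
    classical
    rw [← funext hσ, ← Function.comp_def, ← image_image, image_univ_equiv]
  · intro h
    have hg : Function.Injective g := by
      rw [← Set.injOn_univ, ← coe_univ, ← card_image_iff, ← h, card_image_of_injective _ hf]
    have hrange : Set.range g = Set.range f := by
      simpa only [coe_image, coe_univ, Set.image_univ] using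
        congrArg ((↑) : Finset α → Set α) h.symm
    refine ⟨(Equiv.ofInjective g hg).trans ((Equiv.setCongr hrange).trans
      (Equiv.ofInjective f hf).symm), fun i => ?_⟩
    simp [Equiv.apply_ofInjective_symm]

lemma Ico_eq_image_univ_fin (b : ℤ) (d : ℕ) :
    Ico b (b + d) = univ.image fun l : Fin d => b + (l : ℕ) := by
  ext x
  simp only [mem_Ico, mem_image, mem_univ, true_and]
  constructor
  · rintro ⟨h₁, h₂⟩
    exact ⟨⟨(x - b).toNat, by omega⟩, by simp; omega⟩
  · rintro ⟨l, rfl⟩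
    have := l.isLt
    omega

section Residues

open ZMod

variable {M : ℕ}

lemma injOn_intCast_Ico (b : ℤ) : Set.InjOn (Int.cast : ℤ → ZMod M) (Ico b (b + M)) := by
  intro x hx y hy hxy
  rw [coe_Ico, Set.mem_Ico] at hx hy
  rw [ZMod.intCast_eq_intCast_iff_dvd_sub] at hxy
  have := Int.eq_zero_of_abs_lt_dvd hxy (abs_sub_lt_iff.mpr ⟨by omega, by omega⟩)
  omega

noncomputable def consecutiveResidues (M : ℕ) (b : ℤ) (d : ℕ) : Finset (ZMod M) :=
  (Ico b (b + d)).image (↑)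

lemma card_consecutiveResidues_le (b : ℤ) (d : ℕ) : #(consecutiveResidues M b d) ≤ d :=
  card_image_le.trans (by simp)

lemma image_univ_eq_consecutiveResidues_iff {d : ℕ} {t : Fin d → ℤ}
    (ht : Function.Injective fun l => (t l : ZMod M)) (b : ℤ) :
    univ.image (fun l => (t l : ZMod M)) = consecutiveResidues M b d ↔
      ∃ σ : Equiv.Perm (Fin d), ∀ l, t (σ l) ≡ b + (l : ℕ) [ZMOD M] := by
  rw [consecutiveResidues, Ico_eq_image_univ_fin, image_image,
    ← exists_perm_apply_eq_iff_image_univ_eq ht]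
  simp only [Function.comp_apply, ZMod.intCast_eq_intCast_iff]

variable [NeZero M]

lemma exists_finset_int_lift (S : Finset (ZMod M)) (b : ℤ) :
    ∃ R ⊆ Ico b (b + M), R.image (Int.cast : ℤ → ZMod M) = S := by
  refine ⟨S.image fun x => b + (x - (b : ZMod M)).val, fun y hy => ?_, ?_⟩
  · obtain ⟨x, -, rfl⟩ := mem_image.mp hy
    have := ZMod.val_lt (x - (b : ZMod M))
    rw [mem_Ico]; omega
  · rw [image_image]
    convert image_id (s := S)
    ext x
    simp

lemma re_exp_mul_sum_toCircle_image (φ : ℝ) {R : Finset ℤ}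
    (hR : Set.InjOn (Int.cast : ℤ → ZMod M) R) :
    (Complex.exp (-(2 * π * φ / M : ℝ) * Complex.I) *
        ∑ x ∈ R.image (Int.cast : ℤ → ZMod M), (toCircle x : ℂ)).re =
      ∑ y ∈ R, Real.cos (2 * π * |y - φ| / M) := by
  rw [sum_image hR, mul_sum, Complex.re_sum]
  refine sum_congr rfl fun y _ => ?_
  rw [toCircle_intCast, ← Complex.exp_add,
    show -((2 * π * φ / M : ℝ) : ℂ) * Complex.I + 2 * π * Complex.I * y / M =
      ((2 * π * (y - φ) / M : ℝ) : ℂ) * Complex.I by push_cast; ring,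
    Complex.exp_ofReal_mul_I_re, ← Real.cos_abs, abs_div, abs_mul, abs_of_pos Real.two_pi_pos,
    Nat.abs_cast]

lemma norm_sum_toCircle_consecutiveResidues (hM : 1 < M) {d : ℕ} (hdM : d ≤ M) (b : ℤ) :
    ‖∑ x ∈ consecutiveResidues M b d, (toCircle x : ℂ)‖ =
      Real.sin (π * d / M) / Real.sin (π / M) := by
  set ω := Complex.exp (2 * π * Complex.I / M)
  have hω : ω ≠ 1 := (Complex.isPrimitiveRoot_exp M (NeZero.ne M)).ne_one hM
  have hpow (n : ℕ) : ω ^ n = Complex.exp (Complex.I * (2 * π * n / M : ℝ)) := by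
    rw [← Complex.exp_nat_mul]; congr 1; push_cast; ring
  have hsum : ∑ x ∈ consecutiveResidues M b d, (toCircle x : ℂ) =
      toCircle (b : ZMod M) * ∑ j ∈ range d, ω ^ j := by
    rw [consecutiveResidues, sum_image ((injOn_intCast_Ico b).mono
      (coe_subset.mpr (Ico_subset_Ico_right (by omega)))), Int.Ico_eq_finset_map, sum_map,
      mul_sum, add_sub_cancel_left, Int.toNat_natCast]
    refine sum_congr rfl fun j _ => ?_
    simp only [Function.Embedding.trans_apply, Nat.castEmbedding_apply, addLeftEmbedding_apply]
    rw [toCircle_intCast, toCircle_intCast, ← Complex.exp_nat_mul, ← Complex.exp_add]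
    congr 1
    push_cast
    ring
  have hsin : 0 ≤ Real.sin (π * d / M) := Real.sin_nonneg_of_nonneg_of_le_pi (by positivity) (by
    rw [div_le_iff₀ (by positivity)]; gcongr)
  have hsin₁ : 0 < Real.sin (π / M) :=
    Real.sin_pos_of_pos_of_lt_pi (by positivity) (div_lt_self Real.pi_pos (by exact_mod_cast hM))
  calc ‖∑ x ∈ consecutiveResidues M b d, (toCircle x : ℂ)‖ = ‖ω ^ d - 1‖ / ‖ω ^ 1 - 1‖ := by
        rw [hsum, norm_mul, Circle.norm_coe, one_mul, geom_sum_eq hω, norm_div, pow_one]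
    _ = ‖2 * Real.sin (π * d / M)‖ / ‖2 * Real.sin (π / M)‖ := by
        rw [hpow, hpow, Complex.norm_exp_I_mul_ofReal_sub_one,
          Complex.norm_exp_I_mul_ofReal_sub_one]
        congr 4 <;> push_cast <;> ring
    _ = Real.sin (π * d / M) / Real.sin (π / M) := by
        rw [norm_mul, norm_mul, Real.norm_of_nonneg hsin, Real.norm_of_nonneg hsin₁.le,
          mul_div_mul_left _ _ (by norm_num)]

theorem exists_norm_sum_toCircle_le_consecutiveResidues (S : Finset (ZMod M)) :
    ∃ a : ℤ, ‖∑ x ∈ S, (toCircle x : ℂ)‖ ≤ ‖∑ x ∈ consecutiveResidues M a #S, (toCircle x : ℂ)‖ ∧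
      (‖∑ x ∈ S, (toCircle x : ℂ)‖ = ‖∑ x ∈ consecutiveResidues M a #S, (toCircle x : ℂ)‖ →
        S ⊆ consecutiveResidues M a #S ∨ S ⊆ consecutiveResidues M (a + 1) #S) := by
  have hM : (0 : ℝ) < M := by exact_mod_cast Nat.pos_of_neZero M
  set φ : ℝ := M * (∑ x ∈ S, (toCircle x : ℂ)).arg / (2 * π)
  have hrot : Complex.exp (-(2 * π * φ / M : ℝ) * Complex.I) * ∑ x ∈ S, (toCircle x : ℂ) =
      ‖∑ x ∈ S, (toCircle x : ℂ)‖ := by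
    rw [← exp_neg_arg_mul_I_mul_self, show 2 * π * φ / M = (∑ x ∈ S, (toCircle x : ℂ)).arg by
      simp only [φ]; field_simp]
    ring_nf
  obtain ⟨R, hRsub, rfl⟩ := exists_finset_int_lift S ⌈φ - M / 2⌉
  have hRinj : Set.InjOn (Int.cast : ℤ → ZMod M) R :=
    (injOn_intCast_Ico _).mono (coe_subset.mpr hRsub)
  have hRφ : ∀ y ∈ R, |y - φ| ≤ M / 2 := fun y hy => (abs_sub_le_of_mem_Ico_ceil (hRsub hy)).1
  have hcard := (card_image_of_injOn hRinj).symm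
  set d := #(R.image (Int.cast : ℤ → ZMod M))
  have hdM : d ≤ M := card_le_univ _ |>.trans (ZMod.card M).le
  have hdM' : (d : ℝ) / 2 ≤ M / 2 := by gcongr
  have hg := strictAntiOn_cos_two_pi_mul_div hM
  have hZ : ‖∑ x ∈ R.image (Int.cast : ℤ → ZMod M), (toCircle x : ℂ)‖ =
      ∑ y ∈ R, Real.cos (2 * π * |y - φ| / M) := by
    rw [← re_exp_mul_sum_toCircle_image φ hRinj, hrot, Complex.ofReal_re]
  have hW : ∑ x ∈ Ico ⌈φ - d / 2⌉ (⌈φ - d / 2⌉ + d), Real.cos (2 * π * |x - φ| / M) ≤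
      ‖∑ x ∈ consecutiveResidues M ⌈φ - d / 2⌉ d, (toCircle x : ℂ)‖ := by
    rw [← re_exp_mul_sum_toCircle_image φ ((injOn_intCast_Ico _).mono (coe_subset.mpr
      (Ico_subset_Ico_right (by omega))))]
    refine (Complex.re_le_norm _).trans_eq ?_
    rw [norm_mul, ← Complex.ofReal_neg, Complex.norm_exp_ofReal_mul_I, one_mul]
    rfl
  refine ⟨⌈φ - d / 2⌉, hZ ▸ (sum_le_sum_Ico_ceil hg hdM' hcard hRφ).trans hW, fun heq => ?_⟩
  rcases subset_Ico_ceil_of_sum_eq hg hdM' hcard hRφ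
    (le_antisymm (sum_le_sum_Ico_ceil hg hdM' hcard hRφ) (hZ ▸ heq ▸ hW)) with h | h
  exacts [Or.inl (image_subset_image h), Or.inr (image_subset_image h)]

theorem norm_sum_toCircle_le (hM : 1 < M) (S : Finset (ZMod M)) :
    ‖∑ x ∈ S, (toCircle x : ℂ)‖ ≤ Real.sin (π * #S / M) / Real.sin (π / M) := by
  obtain ⟨a, hle, -⟩ := exists_norm_sum_toCircle_le_consecutiveResidues S
  rwa [norm_sum_toCircle_consecutiveResidues hM (card_le_univ _ |>.trans (ZMod.card M).le)] at hle

theorem norm_sum_toCircle_eq_iff (hM : 1 < M) (S : Finset (ZMod M)) :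
    ‖∑ x ∈ S, (toCircle x : ℂ)‖ = Real.sin (π * #S / M) / Real.sin (π / M) ↔
      ∃ b : ℤ, S = consecutiveResidues M b #S := by
  have hdM : #S ≤ M := card_le_univ _ |>.trans (ZMod.card M).le
  obtain ⟨a, -, heq⟩ := exists_norm_sum_toCircle_le_consecutiveResidues S
  rw [norm_sum_toCircle_consecutiveResidues hM hdM] at heq
  refine ⟨fun h => ?_, fun ⟨b, hb⟩ => ?_⟩
  · rcases heq h with h | h
    exacts [⟨a, eq_of_subset_of_card_le h (card_consecutiveResidues_le _ _)⟩,
      ⟨a + 1, eq_of_subset_of_card_le h (card_consecutiveResidues_le _ _)⟩]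
  · rw [← norm_sum_toCircle_consecutiveResidues hM hdM b, ← hb]

end Residues

/-- Let `M = d + L`. For distinct integers `t₁,…,t_d ∈ {1,…,M}`, the absolute value of
`Σ_l e^{2πi t_l/M}` is at most `sin(πd/M)/sin(π/M)`, with equality if and only if the
residues `t₁,…,t_d` form a set of `d` consecutive residues modulo `M`. -/
theorem exp_sum_le_sin_ratio (d L : ℕ) (hd : 0 < d) (hL : 0 < L)
    (t : Fin d → ℤ) (ht : Function.Injective t)
    (hrange : ∀ l, 1 ≤ t l ∧ t l ≤ ((d + L : ℕ) : ℤ)) :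
    ‖∑ l : Fin d,
        Complex.exp (2 * (Real.pi : ℂ) * Complex.I * (t l : ℂ) / ((d + L : ℕ) : ℂ))‖
      ≤ Real.sin (Real.pi * d / (d + L)) / Real.sin (Real.pi / (d + L)) ∧
    (‖∑ l : Fin d,
        Complex.exp (2 * (Real.pi : ℂ) * Complex.I * (t l : ℂ) / ((d + L : ℕ) : ℂ))‖
        = Real.sin (Real.pi * d / (d + L)) / Real.sin (Real.pi / (d + L)) ↔
      ∃ (s : ℤ) (σ : Equiv.Perm (Fin d)), ∀ l : Fin d,
        t (σ l) ≡ s + 1 + ((l : ℕ) : ℤ) [ZMOD ((d + L : ℕ) : ℤ)]) := by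
  have : NeZero (d + L) := ⟨by omega⟩
  have hM : 1 < d + L := by omega
  have hmem (l : Fin d) : t l ∈ Ico 1 (1 + ((d + L : ℕ) : ℤ)) := by
    have := hrange l; rw [mem_Ico]; omega
  have ht' : Function.Injective fun l => (t l : ZMod (d + L)) := fun i j h =>
    ht <| injOn_intCast_Ico 1 (hmem i) (hmem j) h
  have hsum : ∑ l : Fin d,
      Complex.exp (2 * (Real.pi : ℂ) * Complex.I * (t l : ℂ) / ((d + L : ℕ) : ℂ)) =
        ∑ x ∈ univ.image fun l => (t l : ZMod (d + L)), (ZMod.toCircle x : ℂ) := by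
    simp only [sum_image ht'.injOn, ZMod.toCircle_intCast]
  have hcard : #(univ.image fun l => (t l : ZMod (d + L))) = d := by
    rw [card_image_of_injective _ ht', card_univ, Fintype.card_fin]
  have hle := norm_sum_toCircle_le hM (univ.image fun l => (t l : ZMod (d + L)))
  have hiff := norm_sum_toCircle_eq_iff hM (univ.image fun l => (t l : ZMod (d + L)))
  simp only [hcard, image_univ_eq_consecutiveResidues_iff ht'] at hle hiff
  push_cast at hle hiff
  rw [hsum]
  exact ⟨hle, hiff.trans ⟨fun ⟨b, σ, h⟩ => ⟨b - 1, σ, by simpa using h⟩,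
    fun ⟨s, σ, h⟩ => ⟨s + 1, σ, h⟩⟩⟩
end
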